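/- For a system in the triangular normal form of Theorem 1 with flat output φ = (z¹, z^{k₁+1}), each codistribution Q_A = span{dφ_{[0,A]}} ∩ span{dz} for A = K−1, K, …, R−1 is completely integrable; explicitly, Q_{K−1+l} = span{dz¹, …, dz^{k₁+k₂+l}} for l = 0, 1, …, n − k₁ − k₂. -/

import Mathlib

/-- Vector fields on `ℝⁿ` (in coordinates). -/
abbrev Vec (n : ℕ) := (Fin n → ℝ) → (Fin n → ℝ)

/-- The (truncated) extended state–input manifold: a state in `ℝⁿ` together with the
input jets `u_{[0]}, …, u_{[L]}` of the two inputs. -/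
abbrev ExtM (n L : ℕ) := (Fin n → ℝ) × (Fin (L + 1) → Fin 2 → ℝ)

/-- The `α`-th input jet `u^j_{[α]}` at an extended point (`0` above the truncation
order, which is assumed large enough to be irrelevant). -/
noncomputable def jet {n L : ℕ} (p : ExtM n L) (α : ℕ) (j : Fin 2) : ℝ :=
  if h : α < L + 1 then p.2 ⟨α, h⟩ j else 0

/-- The extended system vector field `f_u` of the control-affine system
`ẋ = f(x) + g₁(x)u¹ + g₂(x)u²`, acting by the system dynamics in the state
directions and by shift in the input-jet directions. -/
noncomputable def extVF {n L : ℕ} (f g₁ g₂ : Vec n) : ExtM n L → ExtM n L :=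
  fun p => (fun i => f p.1 i + jet p 0 0 * g₁ p.1 i + jet p 0 1 * g₂ p.1 i,
            fun α j => jet p ((α : ℕ) + 1) j)

/-- Iterated Lie derivative (total time derivative) of a function on the extended
manifold along `f_u`; `extLieIter f g₁ g₂ α h = h_{[α]}`. -/
noncomputable def extLieIter {n L : ℕ} (f g₁ g₂ : Vec n) :
    ℕ → (ExtM n L → ℝ) → (ExtM n L → ℝ)
  | 0 => id
  | (k+1) => fun h p => fderiv ℝ (extLieIter f g₁ g₂ k h) p (extVF f g₁ g₂ p)

/-- The `i`-th entry of a coordinate vector, by natural-number index (`0`-based). -/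
noncomputable def nth {n : ℕ} (w : Fin n → ℝ) (i : ℕ) : ℝ :=
  if h : i < n then w ⟨i, h⟩ else 0

/-- The `i`-th coordinate basis vector of `ℝⁿ`, by natural-number index. -/
noncomputable def nthBasis (n : ℕ) (i : ℕ) : Fin n → ℝ :=
  if h : i < n then Pi.single (⟨i, h⟩ : Fin n) (1 : ℝ) else 0

/-- The differential `dx^i` of the `i`-th *state* coordinate on the extended
manifold. -/
noncomputable def stateD {n L : ℕ} (i : Fin n) : ExtM n L →L[ℝ] ℝ :=
  (ContinuousLinearMap.proj i).comp
    (ContinuousLinearMap.fst ℝ (Fin n → ℝ) (Fin (L + 1) → Fin 2 → ℝ))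

/-- The pointwise codistribution `P_A = span{dφ_{[0,A]}}` spanned by the differentials
of the (extended) flat output components and their time derivatives up to orders
`A = (a₁, a₂)`. -/
noncomputable def Pspan {n L : ℕ} (f g₁ g₂ : Vec n) (φ : Fin 2 → ExtM n L → ℝ)
    (A : Fin 2 → ℕ) (p : ExtM n L) : Submodule ℝ (ExtM n L →L[ℝ] ℝ) :=
  Submodule.span ℝ
    {ξ | ∃ j : Fin 2, ∃ α ≤ A j, ξ = fderiv ℝ (extLieIter f g₁ g₂ α (φ j)) p}

/-- The pointwise codistribution `span{dx}` of the state differentials. -/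
noncomputable def Xspan (n L : ℕ) : Submodule ℝ (ExtM n L →L[ℝ] ℝ) :=
  Submodule.span ℝ (Set.range fun i : Fin n => (stateD i : ExtM n L →L[ℝ] ℝ))

/-- The pointwise codistribution `Q_A = span{dφ_{[0,A]}} ∩ span{dx}`. -/
noncomputable def Qspan {n L : ℕ} (f g₁ g₂ : Vec n) (φ : Fin 2 → ExtM n L → ℝ)
    (A : Fin 2 → ℕ) (p : ExtM n L) : Submodule ℝ (ExtM n L →L[ℝ] ℝ) :=
  Pspan f g₁ g₂ φ A p ⊓ Xspan n L

/-- A codistribution on the extended manifold is (around generic points) completely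
integrable: on a dense open set, it is locally spanned by differentials of smooth
functions. -/
def GenIntegrable {n L : ℕ} (Q : ExtM n L → Submodule ℝ (ExtM n L →L[ℝ] ℝ)) : Prop :=
  ∃ G : Set (ExtM n L), IsOpen G ∧ Dense G ∧ ∀ p₀ ∈ G,
    ∃ U ∈ nhds p₀, ∃ (q : ℕ) (h : Fin q → ExtM n L → ℝ),
      (∀ i, ContDiffOn ℝ (⊤ : ℕ∞) (h i) U) ∧
      ∀ p ∈ U, Q p = Submodule.span ℝ (Set.range fun i => fderiv ℝ (h i) p)

/-- The structurally flat triangular normal form of Theorem 1 (coordinates `0`-based):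
integrator chains of lengths `k₁` and `k₂` on top, then rows
`ż^l = a^l(z¹,…,z^{l+1}) + b^l(z¹,…,z^{l+1})v¹` with `b^{k₁+k₂} ≠ 0` and
`∂_{z^{l+1}}a^l ≠ 0` or `∂_{z^{l+1}}b^l ≠ 0`, and finally `ż^n = v²`. -/
def TriangularForm (n k₁ k₂ : ℕ) (F G₁ G₂ : Vec n) : Prop :=
  -- first chain
  (∀ i, i + 1 < k₁ → ∀ z,
      nth (F z) i = nth z (i + 1) ∧ nth (G₁ z) i = 0 ∧ nth (G₂ z) i = 0) ∧
  (∀ z, nth (F z) (k₁ - 1) = 0 ∧ nth (G₁ z) (k₁ - 1) = 1 ∧ nth (G₂ z) (k₁ - 1) = 0) ∧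
  -- second chain
  (∀ i, i + 1 < k₂ → ∀ z,
      nth (F z) (k₁ + i) = nth z (k₁ + i + 1) ∧
      nth (G₁ z) (k₁ + i) = 0 ∧ nth (G₂ z) (k₁ + i) = 0) ∧
  -- middle rows `ż^l = a^l + b^l v¹` (row indices k₁+k₂−1,…,n−2, 0-based)
  (∀ l, k₁ + k₂ - 1 ≤ l → l + 1 < n →
    (∀ z z', (∀ i ≤ l + 1, nth z i = nth z' i) →
        nth (F z) l = nth (F z') l ∧ nth (G₁ z) l = nth (G₁ z') l) ∧
    (∀ z, nth (G₂ z) l = 0) ∧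
    (∀ z, fderiv ℝ (fun y => nth (F y) l) z (nthBasis n (l + 1)) ≠ 0 ∨
          fderiv ℝ (fun y => nth (G₁ y) l) z (nthBasis n (l + 1)) ≠ 0)) ∧
  (∀ z, k₁ + k₂ < n → nth (G₁ z) (k₁ + k₂ - 1) ≠ 0) ∧
  -- last row `ż^n = v²`
  (∀ z, nth (F z) (n - 1) = 0 ∧ nth (G₁ z) (n - 1) = 0 ∧ nth (G₂ z) (n - 1) = 1)

/-- The flat output `(z¹, z^{k₁+1})` of the triangular form, as functions on the
extended manifold. -/
noncomputable def triFlatOut (n L k₁ : ℕ) : Fin 2 → ExtM n L → ℝ :=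
  fun j p => nth p.1 (if j = 0 then 0 else k₁)

namespace Stmt9

variable {n L : ℕ}

/-- `dz^i` with a natural-number index (`0` when out of range). -/
noncomputable def stateDn (n L : ℕ) (i : ℕ) : ExtM n L →L[ℝ] ℝ :=
  if h : i < n then stateD ⟨i, h⟩ else 0

/-- `du^j_{[α]}` with a natural-number jet order. -/
noncomputable def jetD (n L : ℕ) (α : ℕ) (j : Fin 2) : ExtM n L →L[ℝ] ℝ :=
  if h : α < L + 1 then
    (ContinuousLinearMap.proj j).comp ((ContinuousLinearMap.proj (⟨α, h⟩ : Fin (L + 1))).comp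
      (ContinuousLinearMap.snd ℝ (Fin n → ℝ) (Fin (L + 1) → Fin 2 → ℝ)))
  else 0

/-- state coordinate basis vector of the extended manifold -/
noncomputable def stateB (n L : ℕ) (i : ℕ) : ExtM n L := (nthBasis n i, 0)

/-- jet coordinate basis vector of the extended manifold -/
noncomputable def jetB (n L : ℕ) (α : ℕ) (j : Fin 2) : ExtM n L :=
  (0, if h : α < L + 1 then Pi.single (⟨α, h⟩ : Fin (L + 1)) (Pi.single j (1 : ℝ)) else 0)

lemma stateD_apply (i : Fin n) (p : ExtM n L) : stateD i p = p.1 i := rfl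

lemma Zfun_eq (i : ℕ) : (fun p : ExtM n L => nth p.1 i) = ⇑(stateDn n L i) := by
  funext p
  simp only [nth, stateDn]
  split
  · rfl
  · simp

lemma Ufun_eq (α : ℕ) (j : Fin 2) :
    (fun p : ExtM n L => jet p α j) = ⇑(jetD n L α j) := by
  funext p
  simp only [jet, jetD]
  split
  · rfl
  · simp

lemma stateDn_apply (i : ℕ) (h : i < n) (p : ExtM n L) :
    stateDn n L i p = p.1 ⟨i, h⟩ := by simp [stateDn, h]; rfl

lemma jetD_apply (α : ℕ) (h : α < L + 1) (j : Fin 2) (p : ExtM n L) :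
    jetD n L α j p = p.2 ⟨α, h⟩ j := by simp [jetD, h]

lemma stateD_stateB (i : Fin n) (i' : ℕ) :
    stateD i (stateB n L i') = if (i : ℕ) = i' then 1 else 0 := by
  simp only [stateD_apply, stateB, nthBasis]
  split
  · rename_i h
    rw [Pi.single_apply]
    by_cases hii : (i : ℕ) = i'
    · have : i = (⟨i', h⟩ : Fin n) := by ext; exact hii
      simp [this, hii]
    · have : i ≠ (⟨i', h⟩ : Fin n) := by
        intro hc; exact hii (by rw [hc])
      simp [this, hii]
  · rename_i h
    have : (i : ℕ) ≠ i' := by omega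
    simp [this]

lemma stateD_jetB (i : Fin n) (α : ℕ) (j : Fin 2) : stateD i (jetB n L α j) = 0 := by
  simp [stateD_apply, jetB]

lemma jetD_stateB (α : ℕ) (j : Fin 2) (i : ℕ) : jetD n L α j (stateB n L i) = 0 := by
  simp only [jetD]
  split
  · simp [stateB]
  · simp

lemma jetD_jetB (α : ℕ) (hα : α < L + 1) (j : Fin 2) (α' : ℕ) (j' : Fin 2) :
    jetD n L α j (jetB n L α' j') =
      if α = α' ∧ j = j' then 1 else 0 := by
  rw [jetD_apply α hα]
  simp only [jetB]
  split
  · rename_i h'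
    simp only [Pi.single_apply]
    by_cases h1 : α = α'
    · have : (⟨α, hα⟩ : Fin (L + 1)) = ⟨α', h'⟩ := by ext; exact h1
      by_cases h2 : j = j'
      · simp [this, h1, h2, Pi.single_apply]
      · simp [this, h1, h2, Pi.single_apply]
    · have : (⟨α, hα⟩ : Fin (L + 1)) ≠ ⟨α', h'⟩ := by
        simp [Fin.ext_iff]; exact h1
      simp [Pi.single_apply, this, h1]
  · rename_i h'
    have : α ≠ α' := by omega
    simp [this]

end Stmt9
namespace Stmt9

variable {n L : ℕ}

lemma jetD_apply' (α : Fin (L + 1)) (j : Fin 2) (p : ExtM n L) :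
    jetD n L (α : ℕ) j p = p.2 α j := by
  rw [jetD_apply _ α.isLt]

lemma vec_decomp (v : ExtM n L) :
    v = (∑ i : Fin n, v.1 i • stateB n L i)
      + ∑ α : Fin (L + 1), ∑ j : Fin 2, v.2 α j • jetB n L (α : ℕ) j := by
  have h1 : (∑ i : Fin n, v.1 i • stateB n L i)
      = ((∑ i : Fin n, v.1 i • nthBasis n i : Fin n → ℝ), (0 : Fin (L+1) → Fin 2 → ℝ)) := by
    rw [Prod.ext_iff]
    constructor
    · rw [Prod.fst_sum]; rfl
    · rw [Prod.snd_sum]; simp [stateB]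
  have h2 : (∑ α : Fin (L + 1), ∑ j : Fin 2, v.2 α j • jetB n L (α : ℕ) j)
      = ((0 : Fin n → ℝ),
         ∑ α : Fin (L + 1), ∑ j : Fin 2, v.2 α j •
            (Pi.single α (Pi.single j (1:ℝ)) : Fin (L+1) → Fin 2 → ℝ)) := by
    rw [Prod.ext_iff]
    constructor
    · rw [Prod.fst_sum]; simp [jetB]
    · rw [Prod.snd_sum]
      refine Finset.sum_congr rfl fun α _ => ?_
      rw [Prod.snd_sum]
      refine Finset.sum_congr rfl fun j _ => ?_
      simp [jetB]
      intro h; have := α.isLt; omega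
  rw [h1, h2, Prod.mk_add_mk, add_zero, zero_add]
  refine Prod.ext ?_ ?_
  · funext i₀
    simp only [Finset.sum_apply, Pi.smul_apply, nthBasis, Fin.is_lt, dif_pos, Fin.eta,
      Pi.single_apply, smul_eq_mul, mul_ite, mul_one, mul_zero]
    rw [Finset.sum_ite_eq Finset.univ i₀ (fun i => v.1 i)]
    simp
  · funext α₀ j₀
    simp only [Finset.sum_apply, Pi.smul_apply, smul_eq_mul]
    rw [Finset.sum_eq_single α₀]
    · rw [Finset.sum_eq_single j₀]
      · simp
      · intro b _ hb
        simp [Pi.single_apply, Ne.symm hb]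
      · simp
    · intro b _ hb
      simp [Pi.single_apply, Ne.symm hb]
    · simp

lemma apply_decomp (ξ : ExtM n L →L[ℝ] ℝ) (v : ExtM n L) :
    ξ v = (∑ i : Fin n, v.1 i * ξ (stateB n L i))
      + ∑ α : Fin (L + 1), ∑ j : Fin 2, v.2 α j * ξ (jetB n L (α : ℕ) j) := by
  conv_lhs => rw [vec_decomp v]
  rw [map_add, map_sum]
  congr 1
  · exact Finset.sum_congr rfl fun i _ => by rw [map_smul]; rfl
  · rw [map_sum]
    refine Finset.sum_congr rfl fun α _ => ?_
    rw [map_sum]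
    exact Finset.sum_congr rfl fun j _ => by rw [map_smul]; rfl

lemma clm_decomp (ξ : ExtM n L →L[ℝ] ℝ) :
    ξ = (∑ i : Fin n, ξ (stateB n L i) • stateD i)
      + ∑ α : Fin (L + 1), ∑ j : Fin 2, ξ (jetB n L (α : ℕ) j) • jetD n L (α : ℕ) j := by
  apply ContinuousLinearMap.ext; intro v
  rw [apply_decomp ξ v]
  simp only [ContinuousLinearMap.add_apply, ContinuousLinearMap.sum_apply,
    ContinuousLinearMap.smul_apply, stateD_apply, jetD_apply', smul_eq_mul]
  congr 1
  · exact Finset.sum_congr rfl fun i _ => mul_comm _ _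
  · exact Finset.sum_congr rfl fun α _ =>
      Finset.sum_congr rfl fun j _ => mul_comm _ _

lemma stateD_mem_Xspan (i : Fin n) : stateD i ∈ Xspan n L :=
  Submodule.subset_span ⟨i, rfl⟩

lemma mem_Xspan_iff (ξ : ExtM n L →L[ℝ] ℝ) :
    ξ ∈ Xspan n L ↔ ∀ (α : Fin (L + 1)) (j : Fin 2), ξ (jetB n L (α : ℕ) j) = 0 := by
  constructor
  · intro hξ α j
    have hle : Xspan n L ≤
        LinearMap.ker (((ContinuousLinearMap.apply ℝ ℝ (jetB n L (α : ℕ) j)) :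
          (ExtM n L →L[ℝ] ℝ) →L[ℝ] ℝ) : (ExtM n L →L[ℝ] ℝ) →ₗ[ℝ] ℝ) := by
      rw [Xspan, Submodule.span_le]
      rintro ξ' ⟨i, rfl⟩
      simp only [SetLike.mem_coe, LinearMap.mem_ker]
      simpa using stateD_jetB (n := n) (L := L) i (α : ℕ) j
    simpa using hle hξ
  · intro h
    rw [clm_decomp ξ]
    refine Submodule.add_mem _ ?_ ?_
    · exact Submodule.sum_mem _ fun i _ =>
        Submodule.smul_mem _ _ (stateD_mem_Xspan i)
    · have : ∀ α : Fin (L + 1), ∀ j : Fin 2,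
          ξ (jetB n L (α : ℕ) j) • jetD n L (α : ℕ) j = 0 := by
        intro α j; rw [h α j, zero_smul]
      simp only [this, Finset.sum_const_zero]
      exact Submodule.zero_mem _
 
lemma mem_span_stateD_of (s : ℕ) (ξ : ExtM n L →L[ℝ] ℝ)
    (hjet : ∀ (α : Fin (L + 1)) (j : Fin 2), ξ (jetB n L (α : ℕ) j) = 0)
    (hst : ∀ i : Fin n, s ≤ (i : ℕ) → ξ (stateB n L (i : ℕ)) = 0) :
    ξ ∈ Submodule.span ℝ
      {ξ' : ExtM n L →L[ℝ] ℝ | ∃ i : Fin n, (i : ℕ) < s ∧ ξ' = stateD i} := by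
  rw [clm_decomp ξ]
  refine Submodule.add_mem _ ?_ ?_
  · refine Submodule.sum_mem _ fun i _ => ?_
    by_cases h : (i : ℕ) < s
    · exact Submodule.smul_mem _ _ (Submodule.subset_span ⟨i, h, rfl⟩)
    · rw [hst i (le_of_not_gt h), zero_smul]; exact Submodule.zero_mem _
  · have : ∀ α : Fin (L + 1), ∀ j : Fin 2,
        ξ (jetB n L (α : ℕ) j) • jetD n L (α : ℕ) j = 0 := by
      intro α j; rw [hjet α j, zero_smul]
    simp only [this, Finset.sum_const_zero]
    exact Submodule.zero_mem _

lemma J_inf_X (l : ℕ) (ξ : ExtM n L →L[ℝ] ℝ)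
    (hJ : ξ ∈ Submodule.span ℝ
      {ξ' : ExtM n L →L[ℝ] ℝ | ∃ m, m < l ∧ ξ' = jetD n L m 0})
    (hX : ξ ∈ Xspan n L) : ξ = 0 := by
  have hst : ∀ i : Fin n, ξ (stateB n L (i : ℕ)) = 0 := by
    intro i
    have hle : Submodule.span ℝ
        {ξ' : ExtM n L →L[ℝ] ℝ | ∃ m, m < l ∧ ξ' = jetD n L m 0} ≤
        LinearMap.ker (((ContinuousLinearMap.apply ℝ ℝ (stateB n L (i : ℕ))) :
          (ExtM n L →L[ℝ] ℝ) →L[ℝ] ℝ) : (ExtM n L →L[ℝ] ℝ) →ₗ[ℝ] ℝ) := by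
      rw [Submodule.span_le]
      rintro ξ' ⟨m, hm, rfl⟩
      simp only [SetLike.mem_coe, LinearMap.mem_ker]
      simpa using jetD_stateB (n := n) (L := L) m 0 (i : ℕ)
    simpa using hle hJ
  have hjet := (mem_Xspan_iff ξ).1 hX
  rw [clm_decomp ξ]
  simp only [hst, hjet, zero_smul, Finset.sum_const_zero, add_zero]

end Stmt9
namespace Stmt9

variable {n L : ℕ}

lemma hasDerivAt_line {E : Type*} [NormedAddCommGroup E] [NormedSpace ℝ E]
    (f : E → ℝ) (z w : E) (hdf : DifferentiableAt ℝ f z) :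
    HasDerivAt (fun s : ℝ => f (z + s • w)) (fderiv ℝ f z w) 0 := by
  have hl : HasDerivAt (fun s : ℝ => z + s • w) w 0 := by
    simpa using ((hasDerivAt_id (0 : ℝ)).smul_const w).const_add z
  have hdf' : HasFDerivAt f (fderiv ℝ f z) ((fun s : ℝ => z + s • w) 0) := by
    simpa using hdf.hasFDerivAt
  exact hdf'.comp_hasDerivAt 0 hl

lemma fderiv_line {E : Type*} [NormedAddCommGroup E] [NormedSpace ℝ E]
    (f : E → ℝ) (z w : E) (g : ℝ → ℝ) (K : ℝ)
    (hdf : DifferentiableAt ℝ f z) (hg : HasDerivAt g K 0)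
    (hline : ∀ s : ℝ, f (z + s • w) = g s) :
    fderiv ℝ f z w = K := by
  have h1 := hasDerivAt_line f z w hdf
  have h2 : HasDerivAt (fun s : ℝ => f (z + s • w)) K 0 := by
    have : (fun s : ℝ => f (z + s • w)) = g := funext hline
    rw [this]; exact hg
  exact h1.unique h2

lemma fderiv_line_const {E : Type*} [NormedAddCommGroup E] [NormedSpace ℝ E]
    (f : E → ℝ) (z w : E)
    (hdf : DifferentiableAt ℝ f z)
    (hline : ∀ s : ℝ, f (z + s • w) = f z) :
    fderiv ℝ f z w = 0 :=
  fderiv_line f z w (fun _ => f z) 0 hdf (hasDerivAt_const 0 (f z)) hline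

variable {F G₁ G₂ : Vec n}

lemma contDiff_extVF (hF : ContDiff ℝ (⊤ : ℕ∞) F) (hG₁ : ContDiff ℝ (⊤ : ℕ∞) G₁)
    (hG₂ : ContDiff ℝ (⊤ : ℕ∞) G₂) :
    ContDiff ℝ (⊤ : ℕ∞) (extVF (n := n) (L := L) F G₁ G₂) := by
  have hjet : ∀ (α : ℕ) (j : Fin 2), ContDiff ℝ (⊤ : ℕ∞) (fun p : ExtM n L => jet p α j) := by
    intro α j
    rw [Ufun_eq]
    exact (jetD n L α j).contDiff
  apply ContDiff.prodMk
  · rw [contDiff_pi]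
    intro i
    have hFi : ContDiff ℝ (⊤ : ℕ∞) fun p : ExtM n L => F p.1 i :=
      (contDiff_pi.1 hF i).comp contDiff_fst
    have hG₁i : ContDiff ℝ (⊤ : ℕ∞) fun p : ExtM n L => G₁ p.1 i :=
      (contDiff_pi.1 hG₁ i).comp contDiff_fst
    have hG₂i : ContDiff ℝ (⊤ : ℕ∞) fun p : ExtM n L => G₂ p.1 i :=
      (contDiff_pi.1 hG₂ i).comp contDiff_fst
    exact (hFi.add ((hjet 0 0).mul hG₁i)).add ((hjet 0 1).mul hG₂i)
  · rw [contDiff_pi]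
    intro α
    rw [contDiff_pi]
    intro j
    exact hjet ((α : ℕ) + 1) j

lemma contDiff_extLieIter (hF : ContDiff ℝ (⊤ : ℕ∞) F) (hG₁ : ContDiff ℝ (⊤ : ℕ∞) G₁)
    (hG₂ : ContDiff ℝ (⊤ : ℕ∞) G₂) (h : ExtM n L → ℝ) (hh : ContDiff ℝ (⊤ : ℕ∞) h) :
    ∀ α, ContDiff ℝ (⊤ : ℕ∞) (extLieIter F G₁ G₂ α h)
  | 0 => hh
  | (k + 1) => by
    have ih := contDiff_extLieIter hF hG₁ hG₂ h hh k
    show ContDiff ℝ (⊤ : ℕ∞) fun p => fderiv ℝ (extLieIter F G₁ G₂ k h) p (extVF F G₁ G₂ p)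
    exact (ih.fderiv_right ((by simp))).clm_apply (contDiff_extVF hF hG₁ hG₂)

end Stmt9
namespace Stmt9

variable {n k₁ k₂ L : ℕ} {F G₁ G₂ : Vec n}

lemma nth_lt (w : Fin n → ℝ) (i : ℕ) (h : i < n) : nth w i = w ⟨i, h⟩ := dif_pos h

lemma extLieIter_succ (h : ExtM n L → ℝ) (α : ℕ) :
    extLieIter F G₁ G₂ (α + 1) h
      = fun p => fderiv ℝ (extLieIter F G₁ G₂ α h) p (extVF F G₁ G₂ p) := rfl

lemma extVF_fst (p : ExtM n L) (i : Fin n) :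
    (extVF F G₁ G₂ p).1 i
      = F p.1 i + jet p 0 0 * G₁ p.1 i + jet p 0 1 * G₂ p.1 i := rfl

lemma extVF_nth (p : ExtM n L) (i : ℕ) (h : i < n) :
    nth (extVF F G₁ G₂ p).1 i
      = nth (F p.1) i + jet p 0 0 * nth (G₁ p.1) i + jet p 0 1 * nth (G₂ p.1) i := by
  rw [nth_lt _ _ h, nth_lt _ _ h, nth_lt _ _ h, nth_lt _ _ h]; rfl

lemma extLie_chain1 (htri : TriangularForm n k₁ k₂ F G₁ G₂) (hk₁n : k₁ ≤ n)
    (α : ℕ) (hα : α < k₁) :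
    extLieIter (n := n) (L := L) F G₁ G₂ α (fun p => nth p.1 0)
      = fun p => nth p.1 α := by
  induction α with
  | zero => rfl
  | succ a ih =>
    rw [extLieIter_succ, ih (by omega)]
    funext p
    have han : a < n := by omega
    rw [Zfun_eq a, ContinuousLinearMap.fderiv, stateDn_apply a han]
    rw [← nth_lt (extVF F G₁ G₂ p).1 a han, extVF_nth p a han]
    obtain ⟨e1, e2, e3⟩ := htri.1 a (by omega) p.1
    rw [e1, e2, e3]; ring

lemma extLie_chain1_jet (htri : TriangularForm n k₁ k₂ F G₁ G₂)
    (hk₁ : 1 ≤ k₁) (hk₁n : k₁ ≤ n) (m : ℕ) :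
    extLieIter (n := n) (L := L) F G₁ G₂ (k₁ + m) (fun p => nth p.1 0)
      = fun p => jet p m 0 := by
  induction m with
  | zero =>
    have hk : k₁ + 0 = (k₁ - 1) + 1 := by omega
    rw [hk, extLieIter_succ, extLie_chain1 htri hk₁n (k₁ - 1) (by omega)]
    funext p
    have han : k₁ - 1 < n := by omega
    rw [Zfun_eq (k₁ - 1), ContinuousLinearMap.fderiv, stateDn_apply (k₁-1) han]
    rw [← nth_lt (extVF F G₁ G₂ p).1 (k₁ - 1) han, extVF_nth p (k₁ - 1) han]
    obtain ⟨e1, e2, e3⟩ := htri.2.1 p.1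
    rw [e1, e2, e3]; ring
  | succ m ih =>
    have hk : k₁ + (m + 1) = (k₁ + m) + 1 := by omega
    rw [hk, extLieIter_succ, ih]
    funext p
    rw [Ufun_eq m 0, ContinuousLinearMap.fderiv]
    by_cases h : m < L + 1
    · rw [jetD_apply m h]
      show jet p (m + 1) 0 = _
      rfl
    · have h2 : ¬ (m + 1 < L + 1) := by omega
      simp [jetD, jet, h, h2]

lemma extLie_chain2 (htri : TriangularForm n k₁ k₂ F G₁ G₂) (hkn : k₁ + k₂ ≤ n)
    (α : ℕ) (hα : α < k₂) :
    extLieIter (n := n) (L := L) F G₁ G₂ α (fun p => nth p.1 k₁)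
      = fun p => nth p.1 (k₁ + α) := by
  induction α with
  | zero => simp [extLieIter]
  | succ a ih =>
    rw [extLieIter_succ, ih (by omega)]
    funext p
    have han : k₁ + a < n := by omega
    rw [Zfun_eq (k₁ + a), ContinuousLinearMap.fderiv, stateDn_apply (k₁ + a) han]
    rw [← nth_lt (extVF F G₁ G₂ p).1 (k₁ + a) han, extVF_nth p (k₁ + a) han]
    obtain ⟨e1, e2, e3⟩ := htri.2.2.1 a (by omega) p.1
    rw [e1, e2, e3]
    have : k₁ + a + 1 = k₁ + (a + 1) := by omega
    rw [this]; ring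

end Stmt9
namespace Stmt9

variable {n k₁ k₂ L : ℕ} {F G₁ G₂ : Vec n}

/-- truncation projection: keep state coordinates `< s` and jets `u¹_{[α]}, α < m`. -/
noncomputable def Pj (n L : ℕ) (s m : ℕ) : ExtM n L →L[ℝ] ExtM n L :=
  (ContinuousLinearMap.pi fun i : Fin n =>
      if (i : ℕ) < s then (stateD i : ExtM n L →L[ℝ] ℝ) else 0).prod
  (ContinuousLinearMap.pi fun α : Fin (L + 1) => ContinuousLinearMap.pi fun j : Fin 2 =>
      if (α : ℕ) < m ∧ j = 0 then jetD n L (α : ℕ) j else 0)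

lemma Pj_fst (s m : ℕ) (p : ExtM n L) (i : Fin n) :
    (Pj n L s m p).1 i = if (i : ℕ) < s then p.1 i else 0 := by
  show (ContinuousLinearMap.pi _) p i = _
  rw [ContinuousLinearMap.pi_apply]
  split <;> simp [stateD_apply]

lemma Pj_snd (s m : ℕ) (p : ExtM n L) (α : Fin (L + 1)) (j : Fin 2) :
    (Pj n L s m p).2 α j = if (α : ℕ) < m ∧ j = 0 then p.2 α j else 0 := by
  have : (Pj n L s m p).2 α j
      = (if (α : ℕ) < m ∧ j = 0 then jetD n L (α : ℕ) j else 0) p := by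
    simp only [Pj, ContinuousLinearMap.prod_apply, ContinuousLinearMap.pi_apply]
  rw [this, apply_ite (fun T : ExtM n L →L[ℝ] ℝ => T p)]
  split
  · rw [jetD_apply']
  · simp

lemma Pj_nth (s m : ℕ) (p : ExtM n L) (i : ℕ) :
    nth (Pj n L s m p).1 i = if i < s then nth p.1 i else 0 := by
  by_cases h : i < n
  · rw [nth_lt _ _ h, nth_lt _ _ h, Pj_fst]
  · rw [nth, dif_neg h, nth, dif_neg h]
    simp

lemma Pj_jet (s m : ℕ) (p : ExtM n L) (α : ℕ) (j : Fin 2) :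
    jet (Pj n L s m p) α j = if α < m ∧ j = 0 then jet p α j else 0 := by
  by_cases h : α < L + 1
  · rw [jet, dif_pos h, jet, dif_pos h, Pj_snd]
  · rw [jet, dif_neg h, jet, dif_neg h]
    simp

lemma Pj_comp (s m s' m' : ℕ) (hs : s ≤ s') (hm : m ≤ m') (p : ExtM n L) :
    Pj n L s m (Pj n L s' m' p) = Pj n L s m p := by
  refine Prod.ext (funext fun i => ?_) (funext fun α => funext fun j => ?_)
  · rw [Pj_fst, Pj_fst, Pj_fst]
    by_cases h : (i : ℕ) < s
    · rw [if_pos h, if_pos h, if_pos (by omega)]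
    · rw [if_neg h, if_neg h]
  · rw [Pj_snd, Pj_snd, Pj_snd]
    by_cases h : (α : ℕ) < m ∧ j = 0
    · rw [if_pos h, if_pos h, if_pos ⟨by omega, h.2⟩]
    · rw [if_neg h, if_neg h]

lemma Pj_stateB_keep (s m i : ℕ) (hi : i < s) :
    Pj n L s m (stateB n L i) = stateB n L i := by
  refine Prod.ext (funext fun i' => ?_) (funext fun α => funext fun j => ?_)
  · rw [Pj_fst]
    by_cases h : (i' : ℕ) < s
    · rw [if_pos h]
    · rw [if_neg h]
      show _ = nthBasis n i i'
      rw [nthBasis]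
      split
      · rw [Pi.single_apply, if_neg]
        intro hc
        rw [hc] at h
        simp at h
        omega
      · simp
  · rw [Pj_snd]
    show _ = (0 : ℝ)
    split <;> simp [stateB]

lemma Pj_stateB_kill (s m i : ℕ) (hi : s ≤ i) :
    Pj n L s m (stateB n L i) = 0 := by
  refine Prod.ext (funext fun i' => ?_) (funext fun α => funext fun j => ?_)
  · rw [Pj_fst]
    show _ = (0 : ℝ)
    split
    · rename_i h
      show nthBasis n i i' = 0
      rw [nthBasis]
      split
      · rw [Pi.single_apply, if_neg]
        intro hc
        rw [hc] at h
        simp at h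
        omega
      · simp
    · rfl
  · rw [Pj_snd]
    show _ = (0 : ℝ)
    split <;> simp [stateB]

lemma Pj_jetB_keep (s m α : ℕ) (hα : α < m) :
    Pj n L s m (jetB n L α 0) = jetB n L α 0 := by
  refine Prod.ext (funext fun i' => ?_) (funext fun α' => funext fun j' => ?_)
  · rw [Pj_fst]
    show _ = (0 : ℝ)
    split <;> simp [jetB]
  · rw [Pj_snd]
    by_cases h : (α' : ℕ) < m ∧ j' = 0
    · rw [if_pos h]
    · rw [if_neg h]
      show _ = (jetB n L α 0).2 α' j'
      simp only [jetB]
      split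
      · rename_i hαL
        by_cases h1 : α' = (⟨α, hαL⟩ : Fin (L + 1))
        · have h2 : j' ≠ (0 : Fin 2) := by
            intro hc
            exact h ⟨by rw [h1]; simpa using hα, hc⟩
          simp [h1, Pi.single_apply, h2]
        · simp [Pi.single_apply, h1]
      · simp

lemma Pj_jetB_kill (s m : ℕ) (α : ℕ) (j : Fin 2) (h : ¬ (α < m ∧ j = 0)) :
    Pj n L s m (jetB n L α j) = 0 := by
  refine Prod.ext (funext fun i' => ?_) (funext fun α' => funext fun j' => ?_)
  · rw [Pj_fst]
    show _ = (0 : ℝ)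
    split <;> simp [jetB]
  · rw [Pj_snd]
    show _ = (0 : ℝ)
    split
    · rename_i h'
      simp only [jetB]
      split
      · rename_i hαL
        by_cases h1 : α' = (⟨α, hαL⟩ : Fin (L + 1))
        · have h2 : j' ≠ j := by
            intro hc
            apply h
            refine ⟨?_, ?_⟩
            · have : (α' : ℕ) = α := by rw [h1]
              omega
            · rw [← hc]; exact h'.2
          simp [h1, Pi.single_apply, h2]
        · simp [Pi.single_apply, h1]
      · simp
    · rfl

end Stmt9
namespace Stmt9

variable {n k₁ k₂ L : ℕ} {F G₁ G₂ : Vec n}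

noncomputable def nthD (n : ℕ) (i : ℕ) : (Fin n → ℝ) →L[ℝ] ℝ :=
  if h : i < n then ContinuousLinearMap.proj ⟨i, h⟩ else 0

lemma nthD_eq (i : ℕ) : (fun w : Fin n → ℝ => nth w i) = ⇑(nthD n i) := by
  funext w
  simp only [nth, nthD]
  split
  · rfl
  · simp

lemma contDiff_row (hF : ContDiff ℝ (⊤ : ℕ∞) F) (r : ℕ) :
    ContDiff ℝ (⊤ : ℕ∞) (fun y : Fin n → ℝ => nth (F y) r) := by
  have : (fun y : Fin n → ℝ => nth (F y) r) = ⇑(nthD n r) ∘ F := by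
    funext y; exact congrFun (nthD_eq r) (F y)
  rw [this]
  exact (nthD n r).contDiff.comp hF

noncomputable def psiF (F G₁ G₂ : Vec n) (L k₁ k₂ m : ℕ) : ExtM n L → ℝ :=
  extLieIter F G₁ G₂ (k₂ + m) (fun p => nth p.1 k₁)

lemma contDiff_Z (i : ℕ) : ContDiff ℝ (⊤ : ℕ∞) (fun p : ExtM n L => nth p.1 i) := by
  rw [Zfun_eq]; exact (stateDn n L i).contDiff

lemma contDiff_psiF (hF : ContDiff ℝ (⊤ : ℕ∞) F) (hG₁ : ContDiff ℝ (⊤ : ℕ∞) G₁)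
    (hG₂ : ContDiff ℝ (⊤ : ℕ∞) G₂) (m : ℕ) :
    ContDiff ℝ (⊤ : ℕ∞) (psiF (n := n) F G₁ G₂ L k₁ k₂ m) :=
  contDiff_extLieIter hF hG₁ hG₂ _ (contDiff_Z k₁) _

lemma psiF_succ (m : ℕ) :
    psiF (n := n) F G₁ G₂ L k₁ k₂ (m + 1)
      = fun p => fderiv ℝ (psiF F G₁ G₂ L k₁ k₂ m) p (extVF F G₁ G₂ p) := rfl

lemma psiF_zero (htri : TriangularForm n k₁ k₂ F G₁ G₂)
    (hk₂ : 1 ≤ k₂) (hk : k₁ + k₂ < n) :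
    psiF (n := n) F G₁ G₂ L k₁ k₂ 0
      = fun p => nth (F p.1) (k₁ + k₂ - 1)
          + jet p 0 0 * nth (G₁ p.1) (k₁ + k₂ - 1) := by
  have h1 : k₂ + 0 = (k₂ - 1) + 1 := by omega
  rw [psiF, h1, extLieIter_succ, extLie_chain2 htri (le_of_lt hk) (k₂ - 1) (by omega)]
  funext p
  have h2 : k₁ + (k₂ - 1) = k₁ + k₂ - 1 := by omega
  have han : k₁ + k₂ - 1 < n := by omega
  rw [h2, Zfun_eq (k₁ + k₂ - 1), ContinuousLinearMap.fderiv, stateDn_apply _ han,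
    ← nth_lt (extVF F G₁ G₂ p).1 _ han, extVF_nth p _ han]
  obtain ⟨_, hG₂0, _⟩ := htri.2.2.2.1 (k₁ + k₂ - 1) le_rfl (by omega)
  rw [hG₂0 p.1]
  ring

/-- the value of a row of the dynamics depends only on the coordinates below it -/
lemma row_dep (htri : TriangularForm n k₁ k₂ F G₁ G₂) (hk₁ : 1 ≤ k₁) (hk₂ : 1 ≤ k₂)
    (i : ℕ) (hi : i + 1 < n) (z z' : Fin n → ℝ)
    (hag : ∀ i', i' ≤ i + 1 → nth z i' = nth z' i')
    (u₁ u₂ u₂' : ℝ) :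
    nth (F z) i + u₁ * nth (G₁ z) i + u₂ * nth (G₂ z) i
      = nth (F z') i + u₁ * nth (G₁ z') i + u₂' * nth (G₂ z') i := by
  by_cases hc1 : i + 1 < k₁
  · obtain ⟨e1, e2, e3⟩ := htri.1 i hc1 z
    obtain ⟨f1, f2, f3⟩ := htri.1 i hc1 z'
    rw [e1, e2, e3, f1, f2, f3, hag (i + 1) le_rfl]; ring
  · by_cases hc2 : i + 1 = k₁
    · have hi' : i = k₁ - 1 := by omega
      obtain ⟨e1, e2, e3⟩ := htri.2.1 z
      obtain ⟨f1, f2, f3⟩ := htri.2.1 z'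
      rw [hi', e1, e2, e3, f1, f2, f3]; ring
    · by_cases hc3 : i + 1 < k₁ + k₂
      · have ha : i = k₁ + (i - k₁) := by omega
        obtain ⟨e1, e2, e3⟩ := htri.2.2.1 (i - k₁) (by omega) z
        obtain ⟨f1, f2, f3⟩ := htri.2.2.1 (i - k₁) (by omega) z'
        have hb : k₁ + (i - k₁) + 1 = i + 1 := by omega
        rw [ha, e1, e2, e3, f1, f2, f3, hb, hag (i + 1) le_rfl]; ring
      · obtain ⟨hinv, hz2, _⟩ := htri.2.2.2.1 i (by omega) hi
        obtain ⟨hFe, hGe⟩ := hinv z z' (fun i' hi' => hag i' hi')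
        rw [hFe, hGe, hz2 z, hz2 z']; ring

lemma line_fst (p : ExtM n L) (s : ℝ) (i : ℕ) :
    (p + s • stateB n L i).1 = p.1 + s • nthBasis n i := rfl

lemma line_jet (p : ExtM n L) (s : ℝ) (i : ℕ) (α : ℕ) (j : Fin 2) :
    jet (p + s • stateB n L i) α j = jet p α j := by
  have h2 : (p + s • stateB n L i).2 = p.2 := by
    show p.2 + s • (0 : Fin (L + 1) → Fin 2 → ℝ) = p.2
    rw [smul_zero, add_zero]
  simp only [jet]
  split
  · rw [h2]
  · rfl

lemma nth_line_ne (z : Fin n → ℝ) (s : ℝ) (t i : ℕ) (h : i ≠ t) :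
    nth (z + s • nthBasis n t) i = nth z i := by
  by_cases hi : i < n
  · rw [nth_lt _ _ hi, nth_lt _ _ hi]
    show z _ + s • nthBasis n t _ = _
    rw [nthBasis]
    split
    · rw [Pi.single_apply, if_neg (by simp [Fin.ext_iff]; omega)]
      simp
    · simp
  · rw [nth, dif_neg hi, nth, dif_neg hi]

lemma fderiv_proj_of_inv (f : ExtM n L → ℝ) (hf : Differentiable ℝ f)
    (P : ExtM n L →L[ℝ] ExtM n L) (hinv : ∀ p, f p = f (P p)) (q u : ExtM n L) :
    fderiv ℝ f q u = fderiv ℝ f (P q) (P u) := by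
  have hfe : f = f ∘ ⇑P := funext hinv
  have h2 : fderiv ℝ f q = (fderiv ℝ f (P q)).comp P := by
    conv_lhs => rw [hfe]
    rw [fderiv_comp q (hf _) P.differentiableAt, P.fderiv]
  rw [h2]; rfl

end Stmt9
namespace Stmt9

variable {n k₁ k₂ L : ℕ} {F G₁ G₂ : Vec n}

lemma nth_coe (w : Fin n → ℝ) (i : Fin n) : nth w (i : ℕ) = w i := by
  rw [nth_lt _ _ i.isLt]

lemma Pj_extVF (htri : TriangularForm n k₁ k₂ F G₁ G₂) (hk₁ : 1 ≤ k₁) (hk₂ : 1 ≤ k₂)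
    (m : ℕ) (hm : k₁ + k₂ + m + 2 ≤ n) (p : ExtM n L) :
    Pj n L (k₁ + k₂ + m + 1) (m + 1)
        (extVF F G₁ G₂ (Pj n L (k₁ + k₂ + m + 2) (m + 2) p))
      = Pj n L (k₁ + k₂ + m + 1) (m + 1) (extVF F G₁ G₂ p) := by
  set q : ExtM n L := Pj n L (k₁ + k₂ + m + 2) (m + 2) p with hq
  have hag : ∀ i', i' < k₁ + k₂ + m + 2 → nth q.1 i' = nth p.1 i' := by
    intro i' hi'
    rw [hq, Pj_nth, if_pos hi']
  have hjet : ∀ α, α < m + 2 → jet q α 0 = jet p α 0 := by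
    intro α hα
    rw [hq, Pj_jet, if_pos ⟨hα, rfl⟩]
  refine Prod.ext (funext fun i => ?_) (funext fun α => funext fun j => ?_)
  · rw [Pj_fst, Pj_fst]
    by_cases hi : (i : ℕ) < k₁ + k₂ + m + 1
    · rw [if_pos hi, if_pos hi]
      have hin : (i : ℕ) + 1 < n := by omega
      show (extVF F G₁ G₂ q).1 i = (extVF F G₁ G₂ p).1 i
      rw [← nth_coe (extVF F G₁ G₂ q).1 i, ← nth_coe (extVF F G₁ G₂ p).1 i,
        extVF_nth q _ (by omega),
        extVF_nth p _ (by omega), hjet 0 (by omega)]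
      exact row_dep htri hk₁ hk₂ (i : ℕ) hin q.1 p.1
        (fun i' hi' => hag i' (by omega)) (jet p 0 0) (jet q 0 1) (jet p 0 1)
    · rw [if_neg hi, if_neg hi]
  · rw [Pj_snd, Pj_snd]
    by_cases hj : (α : ℕ) < m + 1 ∧ j = 0
    · rw [if_pos hj, if_pos hj]
      show jet q ((α : ℕ) + 1) j = jet p ((α : ℕ) + 1) j
      rw [hj.2]
      exact hjet _ (by omega)
    · rw [if_neg hj, if_neg hj]

lemma psiF_inv (htri : TriangularForm n k₁ k₂ F G₁ G₂) (hk₁ : 1 ≤ k₁) (hk₂ : 1 ≤ k₂)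
    (hF : ContDiff ℝ (⊤ : ℕ∞) F) (hG₁ : ContDiff ℝ (⊤ : ℕ∞) G₁) (hG₂ : ContDiff ℝ (⊤ : ℕ∞) G₂) :
    ∀ (m : ℕ), k₁ + k₂ + m + 1 ≤ n →
      ∀ p : ExtM n L, psiF F G₁ G₂ L k₁ k₂ m p
        = psiF F G₁ G₂ L k₁ k₂ m (Pj n L (k₁ + k₂ + m + 1) (m + 1) p) := by
  intro m
  induction m with
  | zero =>
    intro hm p
    rw [psiF_zero htri hk₂ (by omega)]
    set q : ExtM n L := Pj n L (k₁ + k₂ + 0 + 1) (0 + 1) p with hq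
    simp only
    have hjet : jet q 0 0 = jet p 0 0 := by
      rw [hq, Pj_jet, if_pos ⟨by omega, rfl⟩]
    have hag : ∀ i', i' ≤ (k₁ + k₂ - 1) + 1 → nth p.1 i' = nth q.1 i' := by
      intro i' hi'
      rw [hq, Pj_nth, if_pos (by omega)]
    have hrow := row_dep htri hk₁ hk₂ (k₁ + k₂ - 1) (by omega) p.1 q.1 hag
      (jet p 0 0) 0 0
    rw [hjet]
    linarith [hrow]
  | succ m ih =>
    intro hm p
    have h1 : k₁ + k₂ + (m + 1) + 1 = k₁ + k₂ + m + 2 := by omega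
    have h2 : m + 1 + 1 = m + 2 := by omega
    rw [h1, h2, psiF_succ]
    simp only
    have ihm := ih (by omega)
    have hdiff : Differentiable ℝ (psiF (n := n) F G₁ G₂ L k₁ k₂ m) :=
      (contDiff_psiF hF hG₁ hG₂ m).differentiable (by simp)
    have hproj := fderiv_proj_of_inv _ hdiff (Pj n L (k₁ + k₂ + m + 1) (m + 1)) ihm
    set q : ExtM n L := Pj n L (k₁ + k₂ + m + 2) (m + 2) p with hqd
    rw [hproj p (extVF F G₁ G₂ p), hproj q (extVF F G₁ G₂ q)]
    rw [hqd, Pj_comp _ _ _ _ (by omega) (by omega) p, Pj_extVF htri hk₁ hk₂ m (by omega) p]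

end Stmt9
namespace Stmt9

variable {n k₁ k₂ L : ℕ} {F G₁ G₂ : Vec n}

lemma psiF_fderiv_kill (htri : TriangularForm n k₁ k₂ F G₁ G₂)
    (hk₁ : 1 ≤ k₁) (hk₂ : 1 ≤ k₂)
    (hF : ContDiff ℝ (⊤ : ℕ∞) F) (hG₁ : ContDiff ℝ (⊤ : ℕ∞) G₁) (hG₂ : ContDiff ℝ (⊤ : ℕ∞) G₂)
    (m : ℕ) (hm : k₁ + k₂ + m + 1 ≤ n) (p v : ExtM n L)
    (hv : Pj n L (k₁ + k₂ + m + 1) (m + 1) v = 0) :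
    fderiv ℝ (psiF F G₁ G₂ L k₁ k₂ m) p v = 0 := by
  rw [fderiv_proj_of_inv _ ((contDiff_psiF hF hG₁ hG₂ m).differentiable (by simp)) _
      (psiF_inv htri hk₁ hk₂ hF hG₁ hG₂ m hm) p v, hv, map_zero]

/-- `γ_r = ∂a_r/∂z^{r+2} + u¹ ∂b_r/∂z^{r+2}` -/
noncomputable def gam (F G₁ : Vec n) (L : ℕ) (r : ℕ) (p : ExtM n L) : ℝ :=
  fderiv ℝ (fun y => nth (F y) r) p.1 (nthBasis n (r + 1))
    + jet p 0 0 * fderiv ℝ (fun y => nth (G₁ y) r) p.1 (nthBasis n (r + 1))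

lemma psiF_top (htri : TriangularForm n k₁ k₂ F G₁ G₂)
    (hk₁ : 1 ≤ k₁) (hk₂ : 1 ≤ k₂)
    (hF : ContDiff ℝ (⊤ : ℕ∞) F) (hG₁ : ContDiff ℝ (⊤ : ℕ∞) G₁) (hG₂ : ContDiff ℝ (⊤ : ℕ∞) G₂) :
    ∀ (m : ℕ), k₁ + k₂ + m + 1 ≤ n → ∀ p : ExtM n L,
      fderiv ℝ (psiF F G₁ G₂ L k₁ k₂ m) p (stateB n L (k₁ + k₂ + m))
        = ∏ r ∈ Finset.range (m + 1), gam F G₁ L (k₁ + k₂ - 1 + r) p := by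
  intro m
  induction m with
  | zero =>
    intro hm p
    have h01 : (0 : ℕ) + 1 = 1 := rfl
    rw [h01, Finset.prod_range_one]
    have hr : k₁ + k₂ - 1 + 0 = k₁ + k₂ - 1 := by omega
    have ht : k₁ + k₂ + 0 = (k₁ + k₂ - 1) + 1 := by omega
    rw [hr, ht]
    have hFd : Differentiable ℝ (fun y : Fin n → ℝ => nth (F y) (k₁ + k₂ - 1)) :=
      (contDiff_row hF _).differentiable (by simp)
    have hGd : Differentiable ℝ (fun y : Fin n → ℝ => nth (G₁ y) (k₁ + k₂ - 1)) :=
      (contDiff_row hG₁ _).differentiable (by simp)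
    refine fderiv_line _ _ _
      (fun s => nth (F (p.1 + s • nthBasis n (k₁ + k₂ - 1 + 1))) (k₁ + k₂ - 1)
        + jet p 0 0 * nth (G₁ (p.1 + s • nthBasis n (k₁ + k₂ - 1 + 1))) (k₁ + k₂ - 1))
      _
      (((contDiff_psiF hF hG₁ hG₂ 0).differentiable (by simp)) p)
      ?_ ?_
    · have h1 := hasDerivAt_line (fun y => nth (F y) (k₁ + k₂ - 1)) p.1
        (nthBasis n (k₁ + k₂ - 1 + 1)) (hFd p.1)
      have h2 := hasDerivAt_line (fun y => nth (G₁ y) (k₁ + k₂ - 1)) p.1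
        (nthBasis n (k₁ + k₂ - 1 + 1)) (hGd p.1)
      exact h1.add (h2.const_mul (jet p 0 0))
    · intro s
      rw [psiF_zero htri hk₂ (by omega)]
      simp only
      rw [line_fst, line_jet]
  | succ m ih =>
    intro hm p
    have ht : k₁ + k₂ + (m + 1) = k₁ + k₂ + m + 1 := by omega
    have hr : k₁ + k₂ - 1 + (m + 1) = k₁ + k₂ + m := by omega
    rw [ht, Finset.prod_range_succ, hr, ← ih (by omega) p, mul_comm]
    set Dm : ℝ := fderiv ℝ (psiF F G₁ G₂ L k₁ k₂ m) p (stateB n L (k₁ + k₂ + m)) with hDm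
    have hdiffm : Differentiable ℝ (psiF (n := n) F G₁ G₂ L k₁ k₂ m) :=
      (contDiff_psiF hF hG₁ hG₂ m).differentiable (by simp)
    have hinvm := psiF_inv (L := L) htri hk₁ hk₂ hF hG₁ hG₂ m (by omega)
    have hproj := fderiv_proj_of_inv _ hdiffm (Pj n L (k₁ + k₂ + m + 1) (m + 1)) hinvm
    have hFd : Differentiable ℝ (fun y : Fin n → ℝ => nth (F y) (k₁ + k₂ + m)) :=
      (contDiff_row hF _).differentiable (by simp)
    have hGd : Differentiable ℝ (fun y : Fin n → ℝ => nth (G₁ y) (k₁ + k₂ + m)) :=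
      (contDiff_row hG₁ _).differentiable (by simp)
    refine fderiv_line _ _ _
      (fun s => psiF F G₁ G₂ L k₁ k₂ (m + 1) p
        + ((nth (F (p.1 + s • nthBasis n (k₁ + k₂ + m + 1))) (k₁ + k₂ + m)
              - nth (F p.1) (k₁ + k₂ + m))
            + jet p 0 0 * (nth (G₁ (p.1 + s • nthBasis n (k₁ + k₂ + m + 1))) (k₁ + k₂ + m)
              - nth (G₁ p.1) (k₁ + k₂ + m))) * Dm)
      _
      (((contDiff_psiF hF hG₁ hG₂ (m + 1)).differentiable (by simp)) p)
      ?_ ?_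
    · have h1 := (hasDerivAt_line (fun y => nth (F y) (k₁ + k₂ + m)) p.1
        (nthBasis n (k₁ + k₂ + m + 1)) (hFd p.1)).sub_const
          (nth (F p.1) (k₁ + k₂ + m))
      have h2 := (hasDerivAt_line (fun y => nth (G₁ y) (k₁ + k₂ + m)) p.1
        (nthBasis n (k₁ + k₂ + m + 1)) (hGd p.1)).sub_const
          (nth (G₁ p.1) (k₁ + k₂ + m))
      have h3 := ((h1.add (h2.const_mul (jet p 0 0))).mul_const Dm).const_add
        (psiF F G₁ G₂ L k₁ k₂ (m + 1) p)
      exact h3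
    · intro s
      -- the line computation
      set t : ℕ := k₁ + k₂ + m + 1 with hts
      set v : ExtM n L := stateB n L t with hv
      set δ : ℝ := (nth (F (p.1 + s • nthBasis n t)) (k₁ + k₂ + m)
              - nth (F p.1) (k₁ + k₂ + m))
            + jet p 0 0 * (nth (G₁ (p.1 + s • nthBasis n t)) (k₁ + k₂ + m)
              - nth (G₁ p.1) (k₁ + k₂ + m)) with hδ
      have hPp : Pj n L (k₁ + k₂ + m + 1) (m + 1) (p + s • v)
          = Pj n L (k₁ + k₂ + m + 1) (m + 1) p := by
        rw [map_add, map_smul, hv, Pj_stateB_kill _ _ _ (by omega), smul_zero, add_zero]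
      have hkey : Pj n L (k₁ + k₂ + m + 1) (m + 1) (extVF F G₁ G₂ (p + s • v))
          = Pj n L (k₁ + k₂ + m + 1) (m + 1) (extVF F G₁ G₂ p)
            + δ • stateB n L (k₁ + k₂ + m) := by
        obtain ⟨hrinv, hz2, _⟩ := htri.2.2.2.1 (k₁ + k₂ + m) (by omega) (by omega)
        refine Prod.ext (funext fun i => ?_) (funext fun α => funext fun j => ?_)
        · have hrhs1 : (Pj n L (k₁ + k₂ + m + 1) (m + 1) (extVF F G₁ G₂ p)
              + δ • stateB n L (k₁ + k₂ + m)).1 i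
              = (Pj n L (k₁ + k₂ + m + 1) (m + 1) (extVF F G₁ G₂ p)).1 i
                + δ * nthBasis n (k₁ + k₂ + m) i := rfl
          rw [hrhs1, Pj_fst, Pj_fst]
          by_cases hi : (i : ℕ) < k₁ + k₂ + m + 1
          · rw [if_pos hi, if_pos hi]
            by_cases htop : (i : ℕ) = k₁ + k₂ + m
            · have hbas : nthBasis n (k₁ + k₂ + m) i = 1 := by
                rw [nthBasis, dif_pos (by omega : k₁ + k₂ + m < n), Pi.single_apply,
                  if_pos (by simp only [Fin.ext_iff]; omega)]
              rw [hbas, mul_one]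
              rw [← nth_coe (extVF F G₁ G₂ (p + s • v)).1 i,
                ← nth_coe (extVF F G₁ G₂ p).1 i,
                extVF_nth _ _ (by omega), extVF_nth _ _ (by omega),
                htop]
              have hq1 : (p + s • v).1 = p.1 + s • nthBasis n t := by
                rw [hv, hts]; exact line_fst p s t
              rw [hq1, line_jet, line_jet]
              rw [hz2 (p.1 + s • nthBasis n t), hz2 p.1, hδ]
              ring
            · have hbas : nthBasis n (k₁ + k₂ + m) i = 0 := by
                rw [nthBasis, dif_pos (by omega : k₁ + k₂ + m < n), Pi.single_apply,
                  if_neg (by simp [Fin.ext_iff]; omega)]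
              rw [hbas, mul_zero, add_zero]
              rw [← nth_coe (extVF F G₁ G₂ (p + s • v)).1 i,
                ← nth_coe (extVF F G₁ G₂ p).1 i,
                extVF_nth _ _ (by omega), extVF_nth _ _ (by omega)]
              have hq1 : (p + s • v).1 = p.1 + s • nthBasis n t := by
                rw [hv, hts]; exact line_fst p s t
              rw [hq1, line_jet, line_jet]
              refine row_dep htri hk₁ hk₂ (i : ℕ) (by omega) _ p.1
                (fun i' hi' => nth_line_ne p.1 s t i' (by omega)) _ _ _
          · rw [if_neg hi, if_neg hi]
            have hbas : nthBasis n (k₁ + k₂ + m) i = 0 := by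
              rw [nthBasis, dif_pos (by omega : k₁ + k₂ + m < n), Pi.single_apply,
                if_neg (by simp [Fin.ext_iff]; omega)]
            rw [hbas, mul_zero, add_zero]
        · have hrhs2 : (Pj n L (k₁ + k₂ + m + 1) (m + 1) (extVF F G₁ G₂ p)
              + δ • stateB n L (k₁ + k₂ + m)).2 α j
              = (Pj n L (k₁ + k₂ + m + 1) (m + 1) (extVF F G₁ G₂ p)).2 α j
                + δ * (0 : ℝ) := rfl
          rw [hrhs2, mul_zero, add_zero, Pj_snd, Pj_snd]
          by_cases hj : (α : ℕ) < m + 1 ∧ j = 0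
          · rw [if_pos hj, if_pos hj]
            show jet (p + s • v) ((α : ℕ) + 1) j = jet p ((α : ℕ) + 1) j
            rw [hv]; exact line_jet p s t _ j
          · rw [if_neg hj, if_neg hj]
      calc psiF F G₁ G₂ L k₁ k₂ (m + 1) (p + s • v)
          = fderiv ℝ (psiF F G₁ G₂ L k₁ k₂ m) (p + s • v) (extVF F G₁ G₂ (p + s • v)) := rfl
        _ = fderiv ℝ (psiF F G₁ G₂ L k₁ k₂ m) (Pj n L (k₁ + k₂ + m + 1) (m + 1) (p + s • v))
              (Pj n L (k₁ + k₂ + m + 1) (m + 1) (extVF F G₁ G₂ (p + s • v))) :=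
            hproj _ _
        _ = fderiv ℝ (psiF F G₁ G₂ L k₁ k₂ m) (Pj n L (k₁ + k₂ + m + 1) (m + 1) p)
              (Pj n L (k₁ + k₂ + m + 1) (m + 1) (extVF F G₁ G₂ p)
                + δ • stateB n L (k₁ + k₂ + m)) := by rw [hPp, hkey]
        _ = fderiv ℝ (psiF F G₁ G₂ L k₁ k₂ m) (Pj n L (k₁ + k₂ + m + 1) (m + 1) p)
              (Pj n L (k₁ + k₂ + m + 1) (m + 1) (extVF F G₁ G₂ p))
            + δ * fderiv ℝ (psiF F G₁ G₂ L k₁ k₂ m) (Pj n L (k₁ + k₂ + m + 1) (m + 1) p)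
              (stateB n L (k₁ + k₂ + m)) := by
            rw [map_add, map_smul]; rfl
        _ = psiF F G₁ G₂ L k₁ k₂ (m + 1) p + δ * Dm := by
            rw [← hproj p (extVF F G₁ G₂ p)]
            have e2 : fderiv ℝ (psiF F G₁ G₂ L k₁ k₂ m)
                (Pj n L (k₁ + k₂ + m + 1) (m + 1) p) (stateB n L (k₁ + k₂ + m)) = Dm := by
              rw [hDm, hproj p (stateB n L (k₁ + k₂ + m)),
                Pj_stateB_keep _ _ _ (by omega)]
            rw [e2]
            rfl
        _ = _ := by rw [hδ]

end Stmt9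
namespace Stmt9

variable {n k₁ k₂ L : ℕ} {F G₁ G₂ : Vec n}

lemma continuous_jet00 : Continuous (fun p : ExtM n L => jet p 0 0) := by
  rw [Ufun_eq]
  exact (jetD n L 0 0).continuous

lemma continuous_gam (hF : ContDiff ℝ (⊤ : ℕ∞) F) (hG₁ : ContDiff ℝ (⊤ : ℕ∞) G₁) (r : ℕ) :
    Continuous (gam (n := n) F G₁ L r) := by
  have c1 : Continuous fun p : ExtM n L =>
      fderiv ℝ (fun y => nth (F y) r) p.1 (nthBasis n (r + 1)) := by
    exact (ContinuousLinearMap.apply ℝ ℝ (nthBasis n (r + 1))).continuous.comp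
      (((contDiff_row hF r).continuous_fderiv (by simp)).comp continuous_fst)
  have c2 : Continuous fun p : ExtM n L =>
      fderiv ℝ (fun y => nth (G₁ y) r) p.1 (nthBasis n (r + 1)) := by
    exact (ContinuousLinearMap.apply ℝ ℝ (nthBasis n (r + 1))).continuous.comp
      (((contDiff_row hG₁ r).continuous_fderiv (by simp)).comp continuous_fst)
  exact c1.add (continuous_jet00.mul c2)

/-- the map changing only the coordinate `u¹_{[0]}` -/
noncomputable def uline (p : ExtM n L) (t : ℝ) : ExtM n L :=
  (p.1, fun α j => if α = 0 ∧ j = 0 then t else p.2 α j)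

lemma continuous_uline (p : ExtM n L) : Continuous (uline p) := by
  refine Continuous.prodMk continuous_const ?_
  refine continuous_pi fun α => continuous_pi fun j => ?_
  by_cases h : α = 0 ∧ j = 0
  · simp only [if_pos h]; exact continuous_id
  · simp only [if_neg h]; exact continuous_const

lemma uline_self (p : ExtM n L) : uline p (p.2 0 0) = p := by
  refine Prod.ext rfl (funext fun α => funext fun j => ?_)
  show (if α = 0 ∧ j = 0 then p.2 0 0 else p.2 α j) = p.2 α j
  split
  · rename_i h
    rw [h.1, h.2]
  · rfl

lemma uline_fst (p : ExtM n L) (t : ℝ) : (uline p t).1 = p.1 := rfl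

lemma uline_jet00 (p : ExtM n L) (t : ℝ) : jet (uline p t) 0 0 = t := by
  have h0 : (0 : ℕ) < L + 1 := by omega
  rw [jet, dif_pos h0]
  have he : (⟨0, h0⟩ : Fin (L + 1)) = 0 := by simp [Fin.ext_iff]
  rw [he]
  show (if (0 : Fin (L + 1)) = 0 ∧ (0 : Fin 2) = 0 then t else p.2 0 0) = t
  rw [if_pos ⟨rfl, rfl⟩]

lemma gam_uline (p : ExtM n L) (t : ℝ) (r : ℕ) :
    gam F G₁ L r (uline p t)
      = fderiv ℝ (fun y => nth (F y) r) p.1 (nthBasis n (r + 1))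
        + t * fderiv ℝ (fun y => nth (G₁ y) r) p.1 (nthBasis n (r + 1)) := by
  rw [gam, uline_fst, uline_jet00]

lemma dense_goodset (htri : TriangularForm n k₁ k₂ F G₁ G₂)
    (hk₁ : 1 ≤ k₁) (hk₂ : 1 ≤ k₂) (l : ℕ) (hl : k₁ + k₂ + l ≤ n) :
    Dense {p : ExtM n L | ∀ m < l, gam F G₁ L (k₁ + k₂ - 1 + m) p ≠ 0} := by
  intro p
  rw [mem_closure_iff_nhds]
  intro U hU
  set t₀ : ℝ := p.2 0 0 with ht₀
  have hmem : uline p t₀ = p := uline_self p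
  have hW : (uline p) ⁻¹' U ∈ nhds t₀ := by
    apply (continuous_uline p).continuousAt.preimage_mem_nhds
    rw [hmem]; exact hU
  obtain ⟨ε, hε, hball⟩ := Metric.mem_nhds_iff.1 hW
  -- the bad set of parameters is finite
  set A : ℕ → ℝ := fun m =>
    fderiv ℝ (fun y => nth (F y) (k₁ + k₂ - 1 + m)) p.1 (nthBasis n (k₁ + k₂ - 1 + m + 1))
  set B : ℕ → ℝ := fun m =>
    fderiv ℝ (fun y => nth (G₁ y) (k₁ + k₂ - 1 + m)) p.1 (nthBasis n (k₁ + k₂ - 1 + m + 1))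
  have hBad : Set.Finite {t : ℝ | ∃ m < l, A m + t * B m = 0} := by
    have hsub : {t : ℝ | ∃ m < l, A m + t * B m = 0}
        ⊆ ⋃ m ∈ Finset.range l, {t : ℝ | A m + t * B m = 0} := by
      intro t ⟨m, hm, he⟩
      exact Set.mem_biUnion (Finset.mem_range.2 hm) he
    refine Set.Finite.subset ?_ hsub
    refine Set.Finite.biUnion (Finset.range l).finite_toSet fun m hm => ?_
    have hm' : m < l := Finset.mem_range.1 (by simpa using hm)
    by_cases hB : B m = 0
    · have hA : A m ≠ 0 := by
        obtain ⟨_, _, hnd⟩ := htri.2.2.2.1 (k₁ + k₂ - 1 + m) (by omega) (by omega)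
        rcases hnd p.1 with h | h
        · exact h
        · exact absurd hB h
      have : {t : ℝ | A m + t * B m = 0} = ∅ := by
        ext t
        simp [hB, hA]
      rw [this]; exact Set.finite_empty
    · have : {t : ℝ | A m + t * B m = 0} ⊆ {-(A m) / B m} := by
        intro t ht
        have : A m + t * B m = 0 := ht
        have : t = -(A m) / B m := by field_simp; linarith [this]
        simpa using this
      exact Set.Finite.subset (Set.finite_singleton _) this
  -- pick a good parameter in the ball
  have hIoo : (Metric.ball t₀ ε).Infinite := by
    rw [Real.ball_eq_Ioo]
    exact Set.Ioo_infinite (show t₀ - ε < t₀ + ε by linarith)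
  obtain ⟨t, htmem⟩ := (hIoo.diff hBad).nonempty
  refine ⟨uline p t, hball htmem.1, ?_⟩
  intro m hm
  rw [gam_uline]
  intro hc
  exact htmem.2 ⟨m, hm, hc⟩

end Stmt9
namespace Stmt9

variable {n k₁ k₂ L : ℕ} {F G₁ G₂ : Vec n}

lemma stateDn_coe (i : Fin n) : stateDn n L (i : ℕ) = stateD i := by
  simp [stateDn]

set_option maxHeartbeats 1600000 in
lemma span_eq (hk₁ : 1 ≤ k₁) (hk₂ : 1 ≤ k₂) (hkn : k₁ + k₂ ≤ n) (hL : n ≤ L)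
    (hF : ContDiff ℝ (⊤ : ℕ∞) F) (hG₁ : ContDiff ℝ (⊤ : ℕ∞) G₁) (hG₂ : ContDiff ℝ (⊤ : ℕ∞) G₂)
    (htri : TriangularForm n k₁ k₂ F G₁ G₂) (l : ℕ) (hln : k₁ + k₂ + l ≤ n)
    (p : ExtM n L) (hp : ∀ m < l, gam F G₁ L (k₁ + k₂ - 1 + m) p ≠ 0) :
    Qspan F G₁ G₂ (triFlatOut n L k₁)
        (fun j => (if j = 0 then k₁ else k₂) - 1 + l) p
      = Submodule.span ℝ
          {ξ | ∃ i : Fin n, (i : ℕ) < k₁ + k₂ + l ∧ ξ = (stateD i : ExtM n L →L[ℝ] ℝ)} := by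
  set A : Fin 2 → ℕ := fun j => (if j = 0 then k₁ else k₂) - 1 + l with hA
  set S : Submodule ℝ (ExtM n L →L[ℝ] ℝ) := Submodule.span ℝ
    {ξ | ∃ i : Fin n, (i : ℕ) < k₁ + k₂ + l ∧ ξ = (stateD i : ExtM n L →L[ℝ] ℝ)} with hS
  set J : Submodule ℝ (ExtM n L →L[ℝ] ℝ) := Submodule.span ℝ
    {ξ | ∃ m, m < l ∧ ξ = jetD n L m 0} with hJ
  have hφ0 : triFlatOut n L k₁ 0 = fun q : ExtM n L => nth q.1 0 := by
    funext q; simp [triFlatOut]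
  have hφ1 : triFlatOut n L k₁ 1 = fun q : ExtM n L => nth q.1 k₁ := by
    funext q; simp [triFlatOut]
  have hA0 : A 0 = k₁ - 1 + l := by simp [hA]
  have hA1 : A 1 = k₂ - 1 + l := by simp [hA]
  -- jet differentials lie in Pspan
  have hjetP : ∀ m, m < l →
      jetD n L m 0 ∈ Pspan F G₁ G₂ (triFlatOut n L k₁) A p := by
    intro m hm
    refine Submodule.subset_span ⟨0, k₁ + m, ?_, ?_⟩
    · rw [hA0]; omega
    · rw [hφ0, extLie_chain1_jet htri hk₁ (by omega), Ufun_eq,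
        ContinuousLinearMap.fderiv]
  -- chain state differentials lie in Pspan
  have hstP : ∀ i : Fin n, (i : ℕ) < k₁ + k₂ →
      stateD i ∈ Pspan F G₁ G₂ (triFlatOut n L k₁) A p := by
    intro i hi
    by_cases hc : (i : ℕ) < k₁
    · refine Submodule.subset_span ⟨0, (i : ℕ), ?_, ?_⟩
      · rw [hA0]; omega
      · rw [hφ0, extLie_chain1 htri (by omega) _ hc, Zfun_eq,
          ContinuousLinearMap.fderiv, stateDn_coe]
    · refine Submodule.subset_span ⟨1, (i : ℕ) - k₁, ?_, ?_⟩
      · rw [hA1]; omega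
      · rw [hφ1, extLie_chain2 htri hkn _ (by omega)]
        have he : k₁ + ((i : ℕ) - k₁) = (i : ℕ) := by omega
        rw [he, Zfun_eq, ContinuousLinearMap.fderiv, stateDn_coe]
  -- ψ differentials lie in Pspan
  have hpsiP : ∀ m, m < l →
      fderiv ℝ (psiF F G₁ G₂ L k₁ k₂ m) p ∈ Pspan F G₁ G₂ (triFlatOut n L k₁) A p := by
    intro m hm
    refine Submodule.subset_span ⟨1, k₂ + m, ?_, ?_⟩
    · rw [hA1]; omega
    · rw [hφ1]; rfl
  -- vanishing of jet coefficients of dψ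
  have hkillJ : ∀ m, m < l → ∀ (β : Fin (L + 1)) (j : Fin 2),
      ¬((β : ℕ) ≤ m ∧ j = 0) →
      fderiv ℝ (psiF F G₁ G₂ L k₁ k₂ m) p (jetB n L (β : ℕ) j) = 0 := by
    intro m hm β j hc
    refine psiF_fderiv_kill htri hk₁ hk₂ hF hG₁ hG₂ m (by omega) p _ ?_
    refine Pj_jetB_kill _ _ _ _ ?_
    rintro ⟨h1, h2⟩
    exact hc ⟨by omega, h2⟩
  -- vanishing of high state coefficients of dψ
  have hkillS : ∀ m, m < l → ∀ i : Fin n, k₁ + k₂ + m < (i : ℕ) →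
      fderiv ℝ (psiF F G₁ G₂ L k₁ k₂ m) p (stateB n L (i : ℕ)) = 0 := by
    intro m hm i hi
    exact psiF_fderiv_kill htri hk₁ hk₂ hF hG₁ hG₂ m (by omega) p _
      (Pj_stateB_kill _ _ _ (by omega))
  -- nonvanishing of the top coefficient at good points
  have hDm : ∀ m, m < l →
      fderiv ℝ (psiF F G₁ G₂ L k₁ k₂ m) p (stateB n L (k₁ + k₂ + m)) ≠ 0 := by
    intro m hm
    rw [psiF_top htri hk₁ hk₂ hF hG₁ hG₂ m (by omega) p]
    refine Finset.prod_ne_zero_iff.2 fun r hr => ?_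
    exact hp r (by have := Finset.mem_range.1 hr; omega)
  -- the inductive generation of the state differentials
  have key : ∀ m, m ≤ l → ∀ i : Fin n, (i : ℕ) < k₁ + k₂ + m →
      stateD i ∈ Qspan F G₁ G₂ (triFlatOut n L k₁) A p := by
    intro m
    induction m with
    | zero =>
      intro _ i hi
      simp only [Qspan]
      rw [Submodule.mem_inf]
      exact ⟨hstP i (by omega), stateD_mem_Xspan i⟩
    | succ m ih =>
      intro hm i hi
      by_cases hc : (i : ℕ) < k₁ + k₂ + m
      · exact ih (by omega) i hc
      · have htop : (i : ℕ) = k₁ + k₂ + m := by omega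
        set ω : ExtM n L →L[ℝ] ℝ :=
          fderiv ℝ (psiF F G₁ G₂ L k₁ k₂ m) p
            - ∑ α ∈ Finset.range (m + 1),
                (fderiv ℝ (psiF F G₁ G₂ L k₁ k₂ m) p (jetB n L α 0)) • jetD n L α 0
          with hω
        have hωjet : ∀ (β : Fin (L + 1)) (j : Fin 2), ω (jetB n L (β : ℕ) j) = 0 := by
          intro β j
          rw [hω, ContinuousLinearMap.sub_apply, ContinuousLinearMap.sum_apply]
          simp only [ContinuousLinearMap.smul_apply, smul_eq_mul]
          by_cases hc2 : (β : ℕ) ≤ m ∧ j = 0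
          · rw [Finset.sum_eq_single (β : ℕ)]
            · rw [jetD_jetB _ β.isLt _ _ _, if_pos ⟨rfl, hc2.2.symm⟩, mul_one,
                hc2.2, sub_self]
            · intro b hb hbne
              rw [jetD_jetB b (by have := Finset.mem_range.1 hb; omega) _ _ _,
                if_neg (fun hcon => hbne hcon.1), mul_zero]
            · intro hβ
              exact absurd (Finset.mem_range.2 (by omega)) hβ
          · rw [hkillJ m (by omega) β j hc2]
            have hz : ∀ b ∈ Finset.range (m + 1),
                fderiv ℝ (psiF F G₁ G₂ L k₁ k₂ m) p (jetB n L b 0)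
                  * jetD n L b 0 (jetB n L (β : ℕ) j) = 0 := by
              intro b hb
              rw [jetD_jetB b (by have := Finset.mem_range.1 hb; omega) _ _ _,
                if_neg, mul_zero]
              rintro ⟨h1, h2⟩
              have := Finset.mem_range.1 hb
              exact hc2 ⟨by omega, h2.symm⟩
            rw [Finset.sum_eq_zero hz, sub_zero]
        have hωX : ω ∈ Xspan n L := (mem_Xspan_iff ω).2 fun β j => hωjet β j
        have hωP : ω ∈ Pspan F G₁ G₂ (triFlatOut n L k₁) A p :=
          Submodule.sub_mem _ (hpsiP m (by omega))
            (Submodule.sum_mem _ fun α hα => Submodule.smul_mem _ _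
              (hjetP α (by have := Finset.mem_range.1 hα; omega)))
        have hωQ : ω ∈ Qspan F G₁ G₂ (triFlatOut n L k₁) A p := by
          simp only [Qspan]
          rw [Submodule.mem_inf]
          exact ⟨hωP, hωX⟩
        have hωst : ∀ i' : Fin n, ω (stateB n L (i' : ℕ))
            = fderiv ℝ (psiF F G₁ G₂ L k₁ k₂ m) p (stateB n L (i' : ℕ)) := by
          intro i'
          rw [hω, ContinuousLinearMap.sub_apply, ContinuousLinearMap.sum_apply,
            Finset.sum_eq_zero, sub_zero]
          intro b hb
          rw [ContinuousLinearMap.smul_apply, jetD_stateB, smul_zero]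
        have hsum : ω = ∑ i' : Fin n, ω (stateB n L (i' : ℕ)) • stateD i' := by
          conv_lhs => rw [clm_decomp ω]
          have hz : ∀ β : Fin (L + 1), ∀ j : Fin 2,
              ω (jetB n L (β : ℕ) j) • jetD n L (β : ℕ) j = 0 := fun β j => by
            rw [hωjet β j, zero_smul]
          simp only [hz, Finset.sum_const_zero, add_zero]
        set i₀ : Fin n := ⟨k₁ + k₂ + m, by omega⟩ with hi₀
        have hc0 : ω (stateB n L (i₀ : ℕ)) ≠ 0 := by
          rw [hωst]
          exact hDm m (by omega)
        have hsplit : ω = ω (stateB n L (i₀ : ℕ)) • stateD i₀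
            + ∑ i' ∈ Finset.univ.erase i₀, ω (stateB n L (i' : ℕ)) • stateD i' := by
          conv_lhs => rw [hsum]
          rw [← Finset.add_sum_erase _ _ (Finset.mem_univ i₀)]
        have hmem : stateD i₀ ∈ Qspan F G₁ G₂ (triFlatOut n L k₁) A p := by
          have hsub : ω - ∑ i' ∈ Finset.univ.erase i₀,
              ω (stateB n L (i' : ℕ)) • stateD i'
              = ω (stateB n L (i₀ : ℕ)) • stateD i₀ := sub_eq_of_eq_add hsplit
          have heq : (ω (stateB n L (i₀ : ℕ)))⁻¹
              • (ω - ∑ i' ∈ Finset.univ.erase i₀,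
                  ω (stateB n L (i' : ℕ)) • stateD i') = stateD i₀ := by
            rw [hsub, inv_smul_smul₀ hc0]
          rw [← heq]
          refine Submodule.smul_mem _ _ (Submodule.sub_mem _ hωQ
            (Submodule.sum_mem _ fun i' hi' => ?_))
          by_cases hlt : (i' : ℕ) < k₁ + k₂ + m
          · exact Submodule.smul_mem _ _ (ih (by omega) i' hlt)
          · have hne : i' ≠ i₀ := Finset.ne_of_mem_erase hi'
            have hgt : k₁ + k₂ + m < (i' : ℕ) := by
              have hge : k₁ + k₂ + m ≤ (i' : ℕ) := le_of_not_gt hlt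
              rcases eq_or_lt_of_le hge with he | hlt2
              · exact absurd (Fin.ext he.symm) hne
              · exact hlt2
            rw [hωst, hkillS m (by omega) i' hgt, zero_smul]
            exact Submodule.zero_mem _
        have hii : i = i₀ := Fin.ext htop
        rw [hii]
        exact hmem
  -- now prove the two inclusions
  apply le_antisymm
  · -- Q ≤ S
    intro ξ hξ
    simp only [Qspan] at hξ
    rw [Submodule.mem_inf] at hξ
    obtain ⟨hξP, hξX⟩ := hξ
    have hPS : Pspan F G₁ G₂ (triFlatOut n L k₁) A p ≤ S ⊔ J := by
      rw [Pspan, Submodule.span_le]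
      rintro ξ' ⟨j, α, hα, rfl⟩
      by_cases hj : j = 0
      · subst hj
        rw [hA0] at hα
        by_cases hck : α < k₁
        · apply Submodule.mem_sup_left
          apply Submodule.subset_span
          refine ⟨⟨α, by omega⟩, by show α < k₁ + k₂ + l; omega, ?_⟩
          rw [hφ0, extLie_chain1 htri (by omega) α hck, Zfun_eq,
            ContinuousLinearMap.fderiv]
          exact stateDn_coe (⟨α, by omega⟩ : Fin n)
        · apply Submodule.mem_sup_right
          apply Submodule.subset_span
          have hαk : α = k₁ + (α - k₁) := by omega
          refine ⟨α - k₁, by omega, ?_⟩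
          rw [hφ0]
          conv_lhs => rw [hαk]
          rw [extLie_chain1_jet htri hk₁ (by omega), Ufun_eq,
            ContinuousLinearMap.fderiv]
      · have hj1 : j = 1 := by
          apply Fin.ext
          show (j : ℕ) = 1
          have h2 : (j : ℕ) < 2 := j.isLt
          have h0 : (j : ℕ) ≠ 0 := fun hcv => hj (Fin.ext hcv)
          omega
        subst hj1
        rw [hA1] at hα
        by_cases hck : α < k₂
        · apply Submodule.mem_sup_left
          apply Submodule.subset_span
          refine ⟨⟨k₁ + α, by omega⟩, by show k₁ + α < k₁ + k₂ + l; omega, ?_⟩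
          rw [hφ1, extLie_chain2 htri hkn α hck, Zfun_eq,
            ContinuousLinearMap.fderiv]
          exact stateDn_coe (⟨k₁ + α, by omega⟩ : Fin n)
        · have hml : α - k₂ < l := by omega
          have hgen : fderiv ℝ (extLieIter F G₁ G₂ α (triFlatOut n L k₁ 1)) p
              = fderiv ℝ (psiF F G₁ G₂ L k₁ k₂ (α - k₂)) p := by
            rw [hφ1]
            have hαk : α = k₂ + (α - k₂) := by omega
            conv_lhs => rw [hαk]
            rfl
          rw [hgen, clm_decomp (fderiv ℝ (psiF F G₁ G₂ L k₁ k₂ (α - k₂)) p)]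
          refine Submodule.add_mem _ (Submodule.sum_mem _ fun i' _ => ?_)
            (Submodule.sum_mem _ fun β _ => Submodule.sum_mem _ fun j' _ => ?_)
          · by_cases hlt : (i' : ℕ) ≤ k₁ + k₂ + (α - k₂)
            · exact Submodule.smul_mem _ _ (Submodule.mem_sup_left
                (Submodule.subset_span ⟨i', by omega, rfl⟩))
            · rw [hkillS (α - k₂) hml i' (by omega), zero_smul]
              exact Submodule.zero_mem _
          · by_cases hcj : (β : ℕ) ≤ (α - k₂) ∧ j' = 0
            · refine Submodule.smul_mem _ _ (Submodule.mem_sup_right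
                (Submodule.subset_span ⟨(β : ℕ), by omega, ?_⟩))
              rw [hcj.2]
            · rw [hkillJ (α - k₂) hml β j' hcj, zero_smul]
              exact Submodule.zero_mem _
    have hξSJ := hPS hξP
    obtain ⟨σ, hσ, τ, hτ, hστ⟩ := Submodule.mem_sup.1 hξSJ
    have hSX : S ≤ Xspan n L := by
      rw [hS, Submodule.span_le]
      rintro ξ' ⟨i, hi, rfl⟩
      exact stateD_mem_Xspan i
    have hτX : τ ∈ Xspan n L := by
      have hsub := Submodule.sub_mem _ hξX (hSX hσ)
      have : ξ - σ = τ := by rw [← hστ]; abel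
      rwa [this] at hsub
    have hτ0 : τ = 0 := J_inf_X l τ hτ hτX
    rw [← hστ, hτ0, add_zero]
    exact hσ
  · refine Submodule.span_le.2 ?_
    rintro ξ ⟨i, hi, rfl⟩
    exact key l le_rfl i hi

end Stmt9

open Stmt9 in
/-- For a system in the triangular normal form of Theorem 1 with flat
output `φ = (z¹, z^{k₁+1})`, each codistribution
`Q_A = span{dφ_{[0,A]}} ∩ span{dz}`, `A = K−1, K, …, R−1`, is completely integrable;
explicitly, at generic points `Q_{K−1+l} = span{dz¹, …, dz^{k₁+k₂+l}}` for
`l = 0, 1, …, n − k₁ − k₂`. -/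
theorem stmt9 (n k₁ k₂ L : ℕ) (hk₁ : 1 ≤ k₁) (hk₂ : 1 ≤ k₂) (hkn : k₁ + k₂ ≤ n)
    (hL : n ≤ L)
    (F G₁ G₂ : Vec n)
    (hF : ContDiff ℝ (⊤ : ℕ∞) F) (hG₁ : ContDiff ℝ (⊤ : ℕ∞) G₁) (hG₂ : ContDiff ℝ (⊤ : ℕ∞) G₂)
    (htri : TriangularForm n k₁ k₂ F G₁ G₂) :
    ∀ l ≤ n - k₁ - k₂,
      (∃ G : Set (ExtM n L), IsOpen G ∧ Dense G ∧ ∀ p ∈ G,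
          Qspan F G₁ G₂ (triFlatOut n L k₁)
              (fun j => (if j = 0 then k₁ else k₂) - 1 + l) p
            = Submodule.span ℝ
                {ξ | ∃ i : Fin n, (i : ℕ) < k₁ + k₂ + l ∧ ξ = (stateD i : ExtM n L →L[ℝ] ℝ)}) ∧
      GenIntegrable
        (Qspan F G₁ G₂ (triFlatOut n L k₁)
          (fun j => (if j = 0 then k₁ else k₂) - 1 + l)) := by
  intro l hl
  have hln : k₁ + k₂ + l ≤ n := by omega
  set Gset : Set (ExtM n L) :=
    {p | ∀ m < l, gam F G₁ L (k₁ + k₂ - 1 + m) p ≠ 0} with hGset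
  have hGopen : IsOpen Gset := by
    have he : Gset = ⋂ m ∈ Finset.range l,
        {p : ExtM n L | gam F G₁ L (k₁ + k₂ - 1 + m) p ≠ 0} := by
      ext p
      simp [hGset, Finset.mem_range]
    rw [he]
    refine isOpen_biInter_finset fun m _ => ?_
    exact IsOpen.preimage (continuous_gam hF hG₁ _) isOpen_ne
  have hGdense : Dense Gset := dense_goodset htri hk₁ hk₂ l hln
  have hQ : ∀ p ∈ Gset,
      Qspan F G₁ G₂ (triFlatOut n L k₁)
          (fun j => (if j = 0 then k₁ else k₂) - 1 + l) p
        = Submodule.span ℝ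
            {ξ | ∃ i : Fin n, (i : ℕ) < k₁ + k₂ + l ∧ ξ = (stateD i : ExtM n L →L[ℝ] ℝ)} :=
    fun p hp => span_eq hk₁ hk₂ hkn hL hF hG₁ hG₂ htri l hln p hp
  refine ⟨⟨Gset, hGopen, hGdense, hQ⟩, Gset, hGopen, hGdense, fun p₀ hp₀ => ?_⟩
  refine ⟨Gset, hGopen.mem_nhds hp₀, k₁ + k₂ + l,
    fun i => fun p : ExtM n L => nth p.1 (i : ℕ),
    fun i => (contDiff_Z _).contDiffOn, fun p hp => ?_⟩
  rw [hQ p hp]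
  apply le_antisymm
  · refine Submodule.span_le.2 ?_
    rintro ξ ⟨i, hi, rfl⟩
    apply Submodule.subset_span
    refine ⟨⟨(i : ℕ), by omega⟩, ?_⟩
    simp only [Zfun_eq, ContinuousLinearMap.fderiv]
    exact stateDn_coe (L := L) i
  · refine Submodule.span_le.2 ?_
    rintro ξ ⟨i, rfl⟩
    apply Submodule.subset_span
    refine ⟨⟨(i : ℕ), by have := i.isLt; omega⟩,
      by show (i : ℕ) < k₁ + k₂ + l; exact i.isLt, ?_⟩
    simp only [Zfun_eq, ContinuousLinearMap.fderiv]
    exact stateDn_coe (⟨(i : ℕ), by have := i.isLt; omega⟩ : Fin n)
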